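/- In a q-matroid (E,r), if F₁ and F₂ are flats, then F₁ ∩ F₂ is a flat. -/

import Mathlib

/-!
If adding `x` does not raise the rank of `F₁ ⊓ F₂`, then by submodularity applied to `F` and
`(F₁ ⊓ F₂) ⊔ x` it raises the rank of no `F ≥ F₁ ⊓ F₂`; but `x` lies outside `F₁` or `F₂`,
and adding it to that flat does raise the rank.
-/

section RankFunction

variable {α β : Type*} [Lattice α] [AddCommMonoid β] [PartialOrder β] [IsOrderedCancelAddMonoid β]
  {r : α → β}

theorem rank_sup_le_of_rank_sup_le (hmono : Monotone r)
    (hsubmod : ∀ a b, r (a ⊔ b) + r (a ⊓ b) ≤ r a + r b) {a f x : α} (haf : a ≤ f)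
    (hx : r (a ⊔ x) ≤ r a) : r (f ⊔ x) ≤ r f := by
  have hsup : f ⊔ (a ⊔ x) = f ⊔ x := by rw [← sup_assoc, sup_eq_left.mpr haf]
  refine le_of_add_le_add_right (a := r a) ?_
  calc r (f ⊔ x) + r a ≤ r (f ⊔ (a ⊔ x)) + r (f ⊓ (a ⊔ x)) := by
        rw [hsup]; exact add_le_add_right (hmono (le_inf haf le_sup_left)) _
    _ ≤ r f + r (a ⊔ x) := hsubmod f (a ⊔ x)
    _ ≤ r f + r a := add_le_add_right hx _

theorem rank_inf_lt_rank_inf_sup (hmono : Monotone r)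
    (hsubmod : ∀ a b, r (a ⊔ b) + r (a ⊓ b) ≤ r a + r b) {a b x : α}
    (ha : ¬ x ≤ a → r a < r (a ⊔ x)) (hb : ¬ x ≤ b → r b < r (b ⊔ x)) (hx : ¬ x ≤ a ⊓ b) :
    r (a ⊓ b) < r (a ⊓ b ⊔ x) := by
  by_contra hlt
  have hle : r (a ⊓ b ⊔ x) ≤ r (a ⊓ b) := (eq_of_le_of_not_lt (hmono le_sup_left) hlt).ge
  by_cases hxa : x ≤ a
  · have hxb : ¬ x ≤ b := fun hxb => hx (le_inf hxa hxb)
    exact (hb hxb).not_ge (rank_sup_le_of_rank_sup_le hmono hsubmod inf_le_right hle)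
  · exact (ha hxa).not_ge (rank_sup_le_of_rank_sup_le hmono hsubmod inf_le_left hle)

end RankFunction

theorem stmt1 {K E : Type*} [Field K] [AddCommGroup E] [Module K E]
    (r : Submodule K E → ℤ)
    (hR2 : ∀ A B : Submodule K E, A ≤ B → r A ≤ r B)
    (hR3 : ∀ A B : Submodule K E, r (A ⊔ B) + r (A ⊓ B) ≤ r A + r B)
    (F₁ F₂ : Submodule K E)
    (hF₁ : ∀ x : Submodule K E, Module.finrank K x = 1 → ¬ x ≤ F₁ → r F₁ < r (F₁ ⊔ x))
    (hF₂ : ∀ x : Submodule K E, Module.finrank K x = 1 → ¬ x ≤ F₂ → r F₂ < r (F₂ ⊔ x)) :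
    ∀ x : Submodule K E, Module.finrank K x = 1 → ¬ x ≤ F₁ ⊓ F₂ →
      r (F₁ ⊓ F₂) < r ((F₁ ⊓ F₂) ⊔ x) :=
  fun x hx => rank_inf_lt_rank_inf_sup (fun A B => hR2 A B) hR3 (hF₁ x hx) (hF₂ x hx)
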